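/- Define g : [0,1] → [0,1] by g(y) = 2y for 0 ≤ y < 1/2 and g(y) = 2(1 − y) for 1/2 ≤ y ≤ 1, and let g_l = g ∘ g ∘ ⋯ ∘ g denote the l-fold composition of g with itself. Then for every positive integer L and every x ∈ [0,1], |x² − (x − Σ_{l=1}^{L−1} 4^{−l} g_l(x))| ≤ 2^{−2L}. -/

import Mathlib

/-!
The tent map satisfies the exact identity `x² = x - g(x)/2 + g(x)²/4`. Hence the error
`x - Σ_{l=1}^{m} 4^{-l} g_l(x) - x²` of the `m`-th approximant at `x` is a quarter of the error of
the `(m-1)`-st approximant at `g(x) ∈ [0,1]`, and the error of the zeroth approximant `x - x²` is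
at most `1/4` on `[0,1]`.
-/

noncomputable section

def tent (y : ℝ) : ℝ := if y < 1 / 2 then 2 * y else 2 * (1 - y)

lemma tent_mapsTo : Set.MapsTo tent (Set.Icc 0 1) (Set.Icc 0 1) := by
  rintro x ⟨h0, h1⟩
  unfold tent
  split <;> constructor <;> linarith

lemma sq_eq_sub_tent_add_sq (x : ℝ) : x ^ 2 = x - tent x / 2 + tent x ^ 2 / 4 := by
  unfold tent
  split <;> ring

def sawtoothSum (m : ℕ) (x : ℝ) : ℝ :=
  ∑ l ∈ Finset.Icc 1 m, (4 : ℝ) ^ (-(l : ℤ)) * tent^[l] x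

lemma sawtoothSum_zero (x : ℝ) : sawtoothSum 0 x = 0 := by
  simp [sawtoothSum]

lemma sawtoothSum_succ (m : ℕ) (x : ℝ) :
    sawtoothSum (m + 1) x = (tent x + sawtoothSum m (tent x)) / 4 := by
  induction m with
  | zero => simp [sawtoothSum, div_eq_inv_mul]
  | succ m ih =>
    have top (k : ℕ) (y : ℝ) :
        sawtoothSum (k + 1) y = sawtoothSum k y + (4 : ℝ) ^ (-((k + 1 : ℕ) : ℤ)) * tent^[k + 1] y :=
      Finset.sum_Icc_succ_top (by omega) _
    rw [top, ih, top m, Function.iterate_succ_apply tent (m + 1)]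
    push_cast
    rw [show -((m : ℤ) + 1 + 1) = -((m : ℤ) + 1) - 1 by ring, zpow_sub₀ (by norm_num)]
    ring

lemma sawtooth_error_succ (m : ℕ) (x : ℝ) :
    x - sawtoothSum (m + 1) x - x ^ 2
      = (tent x - sawtoothSum m (tent x) - tent x ^ 2) / 4 := by
  rw [sawtoothSum_succ]
  linear_combination -sq_eq_sub_tent_add_sq x

lemma abs_sawtooth_error_le (m : ℕ) {x : ℝ} (hx : x ∈ Set.Icc (0 : ℝ) 1) :
    |x - sawtoothSum m x - x ^ 2| ≤ (4 : ℝ) ^ (-((m : ℤ) + 1)) := by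
  induction m generalizing x with
  | zero =>
    obtain ⟨h0, h1⟩ := hx
    rw [sawtoothSum_zero, sub_zero, Nat.cast_zero, zero_add, zpow_neg_one, abs_le]
    constructor <;> nlinarith [sq_nonneg (x - 1 / 2)]
  | succ m ih =>
    rw [sawtooth_error_succ, abs_div, abs_of_pos (by norm_num : (0 : ℝ) < 4)]
    push_cast
    rw [show -((m : ℤ) + 1 + 1) = -((m : ℤ) + 1) - 1 by ring, zpow_sub₀ (by norm_num), zpow_one]
    exact div_le_div_of_nonneg_right (ih (tent_mapsTo hx)) (by norm_num)

theorem square_sawtooth_approx_general (L : ℕ) (x : ℝ) (hx : x ∈ Set.Icc (0 : ℝ) 1) :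
    |x ^ 2 - (x - ∑ l ∈ Finset.Icc 1 (L - 1), (4 : ℝ) ^ (-(l : ℤ)) * tent^[l] x)|
      ≤ (2 : ℝ) ^ (-(2 * L : ℤ)) := by
  rw [abs_sub_comm]
  calc _ ≤ (4 : ℝ) ^ (-(((L - 1 : ℕ) : ℤ) + 1)) := abs_sawtooth_error_le (L - 1) hx
    _ ≤ (4 : ℝ) ^ (-(L : ℤ)) := zpow_le_zpow_right₀ (by norm_num) (by omega)
    _ = (2 : ℝ) ^ (-(2 * L : ℤ)) := by
      rw [show (4 : ℝ) = 2 ^ (2 : ℤ) by norm_num, ← zpow_mul]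
      ring_nf

/-- Approximation of the square function by sawtooth functions: for every `L ≥ 1` and every
`x ∈ [0,1]`, `|x² − (x − Σ_{l=1}^{L−1} 4^{−l} g_l(x))| ≤ 2^{−2L}`, where `g_l` is the
`l`-fold composition of the tent map `g` with itself. -/
theorem square_sawtooth_approx (L : ℕ) (hL : 0 < L) (x : ℝ) (hx : x ∈ Set.Icc (0 : ℝ) 1) :
    |x ^ 2 - (x - ∑ l ∈ Finset.Icc 1 (L - 1), (4 : ℝ) ^ (-(l : ℤ)) * tent^[l] x)|
      ≤ (2 : ℝ) ^ (-(2 * L : ℤ)) :=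
  square_sawtooth_approx_general L x hx

end
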